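/- arXiv:2105.07084 — 2 statements merged into one kernel-verified Lean document; each statement's English description precedes it below -/
import Mathlib

section
/- Let n ≥ 1 be a natural number and let σ₂ be a holomorphic function on a neighborhood of 0 ∈ ℂ with σ₂(0) ≠ 0. Then there exists a holomorphic function h on a (possibly smaller) neighborhood of 0 with h(0) ≠ 0 such that z^n · log h(z) + 1/h(z)^n + σ₂(z) = 0 for all z ≠ 0 near 0, where log is a branch of logarithm defined near h(0). Consequently w(z) := z·h(z) is an invertible holomorphic germ at 0 satisfying log(w(z)) + 1/w(z)^n = log z - σ₂(z)/z^n. -/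
/-!
Pick `c` with `1 / c ^ n = -σ₂ 0` and a branch `L` of `log` near `c`. The function
`F (z, ζ) = z ^ n * L ζ + 1 / ζ ^ n + σ₂ z` vanishes at `(0, c)`, and since the factor `z ^ n`
kills the logarithmic term on `z = 0`, `∂F/∂ζ (0, c) = -n / c ^ (n + 1) ≠ 0`. The analytic implicit
function theorem then gives `h` with `h 0 = c` and `F (z, h z) = 0`; dividing by `z ^ n` gives
the identity for `w = z * h z`, and `w' 0 = h 0 = c ≠ 0`.
-/

open Filter Topology ContDiff

section ImplicitFunction

variable {𝕜 : Type*} [RCLike 𝕜]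
  {E₁ : Type*} [NormedAddCommGroup E₁] [NormedSpace 𝕜 E₁] [CompleteSpace E₁]
  {E₂ : Type*} [NormedAddCommGroup E₂] [NormedSpace 𝕜 E₂] [CompleteSpace E₂]
  {F : Type*} [NormedAddCommGroup F] [NormedSpace 𝕜 F] [CompleteSpace F]

theorem AnalyticAt.exists_implicitFunction {f : E₁ × E₂ → F} {u : E₁ × E₂}
    (hf : AnalyticAt 𝕜 f u) (hf₂ : (fderiv 𝕜 f u ∘L .inr 𝕜 E₁ E₂).IsInvertible) :
    ∃ ψ : E₁ → E₂, AnalyticAt 𝕜 ψ u.1 ∧ ψ u.1 = u.2 ∧ ∀ᶠ x in 𝓝 u.1, f (x, ψ x) = f u := by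
  have cdf : ContDiffAt 𝕜 ω f u := hf.contDiffAt
  exact ⟨cdf.implicitFunction (by simp) hf₂, (cdf.contDiffAt_implicitFunction _ hf₂).analyticAt,
    cdf.implicitFunction_apply_self _ hf₂, cdf.eventually_apply_implicitFunction _ hf₂⟩

theorem ContinuousLinearMap.isInvertible_of_apply_one_ne_zero {f : 𝕜 →L[𝕜] 𝕜} (hf : f 1 ≠ 0) :
    f.IsInvertible :=
  ⟨ContinuousLinearEquiv.unitsEquivAut 𝕜 (Units.mk0 _ hf), ext_ring (by simp)⟩

theorem AnalyticAt.exists_implicitFunction_of_deriv_ne_zero {f : E₁ × 𝕜 → 𝕜} {a : E₁} {b : 𝕜}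
    (hf : AnalyticAt 𝕜 f (a, b)) (hb : deriv (fun y => f (a, y)) b ≠ 0) :
    ∃ ψ : E₁ → 𝕜, AnalyticAt 𝕜 ψ a ∧ ψ a = b ∧ ∀ᶠ x in 𝓝 a, f (x, ψ x) = f (a, b) := by
  have hpartial : HasFDerivAt (fun y => f (a, y)) (fderiv 𝕜 f (a, b) ∘L .inr 𝕜 E₁ 𝕜) b :=
    hf.differentiableAt.hasFDerivAt.comp b (hasFDerivAt_prodMk_right a b)
  rw [hpartial.hasDerivAt.deriv] at hb
  exact hf.exists_implicitFunction (ContinuousLinearMap.isInvertible_of_apply_one_ne_zero hb)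

end ImplicitFunction

theorem Complex.exists_analyticAt_local_log {c : ℂ} (hc : c ≠ 0) :
    ∃ L : ℂ → ℂ, AnalyticAt ℂ L c ∧ ∀ᶠ w in 𝓝 c, exp (L w) = w := by
  have hslit : ∀ᶠ w in 𝓝 c, w / c ∈ slitPlane :=
    (continuous_id.div_const c).continuousAt.eventually_mem
      (isOpen_slitPlane.mem_nhds (by simp [hc, one_mem_slitPlane]))
  refine ⟨fun w => log (w / c) + log c, ?_, ?_⟩
  · exact ((analyticAt_clog hslit.self_of_nhds).comp (f := (· / c)) analyticAt_id.div_const).add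
      analyticAt_const
  · filter_upwards [hslit] with w hw
    rw [exp_add, exp_log (slitPlane_ne_zero hw), exp_log hc, div_mul_cancel₀ _ hc]

theorem exists_analyticAt_pow_mul_add_one_div_pow_add_eq_zero {n : ℕ} (hn : n ≠ 0)
    {σ L : ℂ → ℂ} {c : ℂ} (hσ : AnalyticAt ℂ σ 0) (hL : AnalyticAt ℂ L c) (hc : c ≠ 0)
    (hcσ : 1 / c ^ n + σ 0 = 0) :
    ∃ h : ℂ → ℂ, AnalyticAt ℂ h 0 ∧ h 0 = c ∧
      ∀ᶠ z in 𝓝 0, z ^ n * L (h z) + 1 / h z ^ n + σ z = 0 := by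
  set F : ℂ × ℂ → ℂ := fun p => p.1 ^ n * L p.2 + 1 / p.2 ^ n + σ p.1
  have hF : AnalyticAt ℂ F (0, c) := by
    have hLsnd : AnalyticAt ℂ (fun p : ℂ × ℂ => L p.2) (0, c) := hL.comp_of_eq analyticAt_snd rfl
    have hσfst : AnalyticAt ℂ (fun p : ℂ × ℂ => σ p.1) (0, c) := hσ.comp_of_eq analyticAt_fst rfl
    exact ((analyticAt_fst.pow n).mul hLsnd |>.add
      (analyticAt_const.div (analyticAt_snd.pow n) (pow_ne_zero n hc))).add hσfst
  have hF₀ : F (0, c) = 0 := by simpa [F, zero_pow hn] using hcσ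
  have hFζ : deriv (fun ζ => F (0, ζ)) c ≠ 0 := by
    have hpartial : (fun ζ => F (0, ζ)) = fun ζ => (ζ ^ n)⁻¹ + σ 0 := by
      funext ζ
      simp [F, zero_pow hn]
    rw [hpartial, (((hasDerivAt_pow n c).fun_inv (pow_ne_zero n hc)).add_const _).deriv]
    simp [hn, hc]
  simpa only [hF₀] using hF.exists_implicitFunction_of_deriv_ne_zero hFζ

/-- normalization of the parabolic developing map `log z + σ₂(z)/z^n`.
There is a holomorphic `h` near `0` with `h 0 ≠ 0` and a branch `L` of logarithm near `h 0`
with `z^n · L(h z) + 1/(h z)^n + σ₂ z = 0` for `z ≠ 0` near `0`; consequently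
`w(z) = z·h(z)` is an invertible germ with
`log (w z) + 1/(w z)^n = log z - σ₂ z / z^n` (the branch of `log (w z)` being
`log z + L (h z)`). -/
theorem stmt1 (n : ℕ) (hn : 1 ≤ n) (σ₂ : ℂ → ℂ)
    (hσ : AnalyticAt ℂ σ₂ 0) (hσ0 : σ₂ 0 ≠ 0) :
    ∃ h L : ℂ → ℂ, AnalyticAt ℂ h 0 ∧ h 0 ≠ 0 ∧ AnalyticAt ℂ L (h 0) ∧
      (∀ᶠ w in nhds (h 0), Complex.exp (L w) = w) ∧
      (∀ᶠ z in nhds (0 : ℂ), z ≠ 0 → z ^ n * L (h z) + 1 / (h z) ^ n + σ₂ z = 0) ∧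
      deriv (fun z => z * h z) 0 ≠ 0 ∧
      (∀ᶠ z in nhds (0 : ℂ), z ≠ 0 →
        (Complex.log z + L (h z)) + 1 / (z * h z) ^ n
          = Complex.log z - σ₂ z / z ^ n) := by
  have hn₀ : n ≠ 0 := by omega
  obtain ⟨c, hcn⟩ := IsAlgClosed.exists_pow_nat_eq (-(σ₂ 0)⁻¹) (Nat.pos_of_ne_zero hn₀)
  have hc : c ≠ 0 := by
    rintro rfl
    simp [zero_pow hn₀, hσ0] at hcn
  obtain ⟨L, hL, hexp⟩ := Complex.exists_analyticAt_local_log hc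
  obtain ⟨h, hh, rfl, hF⟩ :=
    exists_analyticAt_pow_mul_add_one_div_pow_add_eq_zero hn₀ hσ hL hc (by simp [hcn])
  have hw' : deriv (fun z => z * h z) 0 = h 0 := by
    simpa using ((hasDerivAt_id' (0 : ℂ)).fun_mul hh.differentiableAt.hasDerivAt).deriv
  refine ⟨h, L, hh, hc, hL, hexp, hF.mono fun z hz _ => hz, hw' ▸ hc, ?_⟩
  filter_upwards [hF] with z hFz hz
  rw [← sub_eq_zero]
  calc _ = (z ^ n * L (h z) + 1 / h z ^ n + σ₂ z) / z ^ n := by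
        rw [mul_pow, ← one_div_mul_one_div]
        field_simp
        ring
    _ = 0 := by rw [hFz, zero_div]
end

section
/- Let U_{R'} = {z ∈ ℂ : |z| > R'}. For R' sufficiently large, the map f(z) = z + log z (using the principal branch of log on ℂ ∖ ℝ⁻ and extended via the identification of V_R) is injective on U_{R'} ∖ ℝ⁻. In particular, there exists R' > 0 such that for all z₁, z₂ ∈ ℂ ∖ ℝ⁻ with |z₁|, |z₂| > R', if z₁ + Log z₁ = z₂ + Log z₂ then z₁ = z₂, where Log is the principal branch of logarithm. -/
/-!
Put `w = z₁ - z₂ = Log z₂ - Log z₁`. Since the real logarithm is `(1/R)`-Lipschitz on `[R, ∞)`,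
`|Re w| ≤ |w| / R`, while `Im w = arg z₂ - arg z₁` has modulus `< π`: points in opposite
half-planes would give `Im w` the wrong sign. Hence `w` is small, so `w = Log (z₂ / z₁)` with
`z₂ / z₁ = 1 - w / z₁` close to `1`, and `|w| ≤ (3/2) |w| / |z₁|` forces `w = 0`.
-/

open Complex Real

lemma Real.abs_log_sub_log_le {R a b : ℝ} (hR : 0 < R) (ha : R ≤ a) (hb : R ≤ b) :
    |log a - log b| ≤ |a - b| / R := by
  wlog hba : b ≤ a generalizing a b
  · rw [abs_sub_comm, abs_sub_comm a]
    exact this hb ha (le_of_not_ge hba)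
  have hb₀ : 0 < b := hR.trans_le hb
  have ha₀ : 0 < a := hb₀.trans_le hba
  rw [abs_of_nonneg (sub_nonneg.2 (log_le_log hb₀ hba)), abs_of_nonneg (sub_nonneg.2 hba),
    ← log_div ha₀.ne' hb₀.ne']
  calc log (a / b) ≤ a / b - 1 := log_le_sub_one_of_pos (div_pos ha₀ hb₀)
    _ = (a - b) / b := by field_simp
    _ ≤ (a - b) / R := div_le_div_of_nonneg_left (sub_nonneg.2 hba) hR hb

lemma Complex.mem_slitPlane_of_ne_zero {z : ℂ} (hz : z ≠ 0) (h : ¬(z.im = 0 ∧ z.re < 0)) :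
    z ∈ slitPlane := by
  rw [mem_slitPlane_iff]
  by_contra! hc
  exact h ⟨hc.2, hc.1.lt_of_ne fun hre => hz (ext hre hc.2)⟩

lemma Complex.abs_arg_sub_arg_lt_pi {z₁ z₂ : ℂ} (h₁ : z₁ ∈ slitPlane) (h₂ : z₂ ∈ slitPlane)
    (h : z₁.im - z₂.im = arg z₂ - arg z₁) : |arg z₂ - arg z₁| < π := by
  have hlt₁ := (arg_le_pi z₁).lt_of_ne (mem_slitPlane_iff_arg.1 h₁).1
  have hlt₂ := (arg_le_pi z₂).lt_of_ne (mem_slitPlane_iff_arg.1 h₂).1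
  have hgt₁ := neg_pi_lt_arg z₁
  have hgt₂ := neg_pi_lt_arg z₂
  have sign (z : ℂ) : (0 ≤ z.im ∧ 0 ≤ arg z) ∨ (z.im < 0 ∧ arg z < 0) :=
    (le_or_gt 0 z.im).imp (fun h => ⟨h, arg_nonneg_iff.2 h⟩) (fun h => ⟨h, arg_neg_iff.2 h⟩)
  rw [abs_sub_lt_iff]
  rcases sign z₁ with ⟨i₁, a₁⟩ | ⟨i₁, a₁⟩ <;> rcases sign z₂ with ⟨i₂, a₂⟩ | ⟨i₂, a₂⟩ <;>
    constructor <;> linarith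

lemma Complex.norm_log_sub_log_le {z₁ z₂ : ℂ} (hz₁ : z₁ ≠ 0) (hz₂ : z₂ ≠ 0)
    (him : |(log z₂ - log z₁).im| < π) (hclose : ‖z₂ - z₁‖ ≤ ‖z₁‖ / 2) :
    ‖log z₂ - log z₁‖ ≤ 3 / 2 * (‖z₂ - z₁‖ / ‖z₁‖) := by
  obtain ⟨hlo, hhi⟩ := abs_lt.1 him
  have hdiv : log z₂ - log z₁ = log (1 + (z₂ - z₁) / z₁) := by
    conv_lhs => rw [← log_exp hlo hhi.le, exp_sub, exp_log hz₂, exp_log hz₁]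
    congr 1
    field_simp
    ring
  have hsmall : ‖(z₂ - z₁) / z₁‖ ≤ 1 / 2 := by
    rw [norm_div, div_le_iff₀ (norm_pos_iff.2 hz₁)]
    linarith
  rw [hdiv, ← norm_div]
  exact norm_log_one_add_half_le_self hsmall

/-- for `R'` large enough, `z ↦ z + Log z` (principal branch) is injective
on `{|z| > R'} ∖ ℝ⁻`. -/
theorem stmt8 :
    ∃ R' : ℝ, 0 < R' ∧ ∀ z₁ z₂ : ℂ,
      R' < ‖z₁‖ → R' < ‖z₂‖ →
      ¬(z₁.im = 0 ∧ z₁.re < 0) → ¬(z₂.im = 0 ∧ z₂.re < 0) →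
      z₁ + Complex.log z₁ = z₂ + Complex.log z₂ → z₁ = z₂ := by
  refine ⟨10, by norm_num, fun z₁ z₂ h₁ h₂ hs₁ hs₂ heq => ?_⟩
  have hz₁ : z₁ ≠ 0 := norm_pos_iff.1 (by linarith)
  have hz₂ : z₂ ≠ 0 := norm_pos_iff.1 (by linarith)
  have hw : z₁ - z₂ = log z₂ - log z₁ := by linear_combination heq
  have him : |(z₁ - z₂).im| < π := by
    have harg : (z₁ - z₂).im = arg z₂ - arg z₁ := by rw [hw, sub_im, log_im, log_im]
    rw [harg]
    exact abs_arg_sub_arg_lt_pi (mem_slitPlane_of_ne_zero hz₁ hs₁)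
      (mem_slitPlane_of_ne_zero hz₂ hs₂) (by rw [← sub_im, harg])
  have hre : |(z₁ - z₂).re| ≤ ‖z₁ - z₂‖ / 10 := by
    rw [hw, sub_re, log_re, log_re, ← hw, norm_sub_rev]
    exact (Real.abs_log_sub_log_le (by norm_num) h₂.le h₁.le).trans
      (by gcongr; exact abs_norm_sub_norm_le z₂ z₁)
  have hclose : ‖z₂ - z₁‖ ≤ ‖z₁‖ / 2 := by
    rw [norm_sub_rev]
    linarith [norm_le_abs_re_add_abs_im (z₁ - z₂), pi_lt_four]
  have hlog := norm_log_sub_log_le hz₁ hz₂ (by rwa [← hw]) hclose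
  rw [← hw, norm_sub_rev z₂, mul_div_assoc', le_div_iff₀ (norm_pos_iff.2 hz₁)] at hlog
  have : ‖z₁ - z₂‖ = 0 := by nlinarith [norm_nonneg (z₁ - z₂)]
  exact sub_eq_zero.1 (norm_eq_zero.1 this)
end
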